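/- arXiv:2309.08437 — 2 statements merged into one kernel-verified Lean document; each statement's English description precedes it below -/
import Mathlib

section
/- Let k ≥ 2 be an integer, let d_1, …, d_k be positive integers and w_1, …, w_k be integers with strictly increasing slopes w_1/d_1 < w_2/d_2 < ⋯ < w_k/d_k. Set d = d_1 + ⋯ + d_k and w = w_1 + ⋯ + w_k. Then ∑_{i=1}^{k} (k + 1 − i)·(w_i − d_i·w/d) < 0, a strict inequality of rational numbers. -/
/-!
After subtracting `d_i · w/d` from each `w_i`, the new weights `x_i` sum to zero and still have
strictly increasing slopes `x_i / d_i`. Hence every proper prefix sum `x_1 + ⋯ + x_m` is negative: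
either the slope at `m + 1` is `≤ 0`, and then all earlier `x_i` are negative, or it is `> 0`, and
then the complementary suffix is positive. By Abel summation the weighted sum is the sum of the
prefix sums, whose last term vanishes and whose others are negative.
-/

open Finset

theorem sum_range_sub_mul_eq_sum_partial_sums {R : Type*} [CommRing R] (x : ℕ → R) (n : ℕ) :
    ∑ i ∈ range n, ((n : R) - i) * x i = ∑ m ∈ range n, ∑ i ∈ range (m + 1), x i := by
  induction n with
  | zero => simp
  | succ n ih =>
    rw [sum_range_succ (fun m => ∑ i ∈ range (m + 1), x i), ← ih, sum_range_succ x n,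
      sum_range_succ, Nat.cast_succ]
    simp only [add_sub_right_comm _ (1 : R), add_mul, one_mul, sum_add_distrib]
    ring

variable {K : Type*} [Field K]

theorem sum_range_sub_mul_avg_eq_zero {k : ℕ} {d w : ℕ → K}
    (hD : ∑ j ∈ range k, d j ≠ 0) :
    ∑ i ∈ range k, (w i - d i * ((∑ j ∈ range k, w j) / ∑ j ∈ range k, d j)) = 0 := by
  rw [sum_sub_distrib, ← sum_mul, mul_div_cancel₀ _ hD, sub_self]

section

variable [LinearOrder K] [IsStrictOrderedRing K]

theorem sum_range_neg_of_slope_lt {k m : ℕ} (hm0 : 0 < m) (hmk : m < k) {d x : ℕ → K}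
    (hd : ∀ i < k, 0 < d i) (hx : ∑ i ∈ range k, x i = 0)
    (hs : ∀ i j, i < j → j < k → x i / d i < x j / d j) :
    ∑ i ∈ range m, x i < 0 := by
  rcases le_or_gt (x m / d m) 0 with hm | hm
  · refine sum_neg (fun i hi => ?_) ⟨0, mem_range.2 hm0⟩
    have hi := mem_range.1 hi
    have hslope : x i / d i < 0 := (hs i m hi hmk).trans_le hm
    simpa using (div_lt_iff₀ (hd i (hi.trans hmk))).1 hslope
  · have hsuffix : 0 < ∑ i ∈ Ico m k, x i := by
      refine sum_pos (fun i hi => ?_) ⟨m, mem_Ico.2 ⟨le_rfl, hmk⟩⟩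
      obtain ⟨hmi, hik⟩ := mem_Ico.1 hi
      have hslope : 0 < x i / d i :=
        hmi.eq_or_lt.elim (fun h => h ▸ hm) (fun h => hm.trans (hs m i h hik))
      exact (div_pos_iff_of_pos_right (hd i hik)).1 hslope
    have hsplit := sum_range_add_sum_Ico x hmk.le
    linarith

theorem sum_range_sub_mul_neg_of_sum_eq_zero {k : ℕ} (hk : 2 ≤ k) {d x : ℕ → K}
    (hd : ∀ i < k, 0 < d i) (hx : ∑ i ∈ range k, x i = 0)
    (hs : ∀ i j, i < j → j < k → x i / d i < x j / d j) :
    ∑ i ∈ range k, ((k : K) - i) * x i < 0 := by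
  obtain ⟨n, rfl⟩ : ∃ n, k = n + 1 := ⟨k - 1, by omega⟩
  rw [sum_range_sub_mul_eq_sum_partial_sums, sum_range_succ, hx, add_zero]
  exact sum_neg (fun m hm => sum_range_neg_of_slope_lt m.succ_pos
    (by simpa using mem_range.1 hm) hd hx hs) ⟨0, mem_range.2 (by omega)⟩

theorem sum_range_sub_mul_sub_mul_avg_neg {k : ℕ} (hk : 2 ≤ k) {d w : ℕ → K}
    (hd : ∀ i < k, 0 < d i) (hs : ∀ i j, i < j → j < k → w i / d i < w j / d j) :
    ∑ i ∈ range k, ((k : K) - i) *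
      (w i - d i * ((∑ j ∈ range k, w j) / ∑ j ∈ range k, d j)) < 0 := by
  set c := (∑ j ∈ range k, w j) / ∑ j ∈ range k, d j
  have hD : 0 < ∑ j ∈ range k, d j :=
    sum_pos (fun i hi => hd i (mem_range.1 hi)) ⟨0, mem_range.2 (by omega)⟩
  have hslope : ∀ i < k, (w i - d i * c) / d i = w i / d i - c := fun i hi => by
    rw [sub_div, mul_div_cancel_left₀ _ (hd i hi).ne']
  refine sum_range_sub_mul_neg_of_sum_eq_zero hk hd (sum_range_sub_mul_avg_eq_zero hD.ne')
    (fun i j hij hjk => ?_)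
  rw [hslope i (hij.trans hjk), hslope j hjk]
  exact sub_lt_sub_right (hs i j hij hjk) c

end

/-- For a partition `d = d_1 + ⋯ + d_k` into positive integers and integers `w_i`
with strictly increasing slopes `w_1/d_1 < ⋯ < w_k/d_k`, one has
`∑ (k + 1 - i) · (w_i - d_i · w/d) < 0`, where the index `i` is `0`-based so the
weight of the `i`-th term is `k - i`. -/
theorem antidominant_pairing_neg (k : ℕ) (hk : 2 ≤ k) (d : ℕ → ℕ) (w : ℕ → ℤ)
    (hd : ∀ i < k, 0 < d i)
    (hslope : ∀ i j, i < j → j < k →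
      (w i : ℚ) / (d i : ℚ) < (w j : ℚ) / (d j : ℚ)) :
    ∑ i ∈ range k, ((k : ℚ) - (i : ℚ)) *
      ((w i : ℚ) - (d i : ℚ) *
        ((∑ j ∈ range k, (w j : ℚ)) / (∑ j ∈ range k, (d j : ℚ)))) < 0 :=
  sum_range_sub_mul_sub_mul_avg_neg hk (fun i hi => Nat.cast_pos.2 (hd i hi)) hslope
end

section
/- Let d be a positive integer and w an integer. Let e_1, …, e_d be the standard basis of ℝ^d, let ρ = ((d−1)/2, (d−3)/2, …, (1−d)/2) ∈ ℝ^d, and let W(d) ⊂ ℝ^d be the zonotope consisting of all vectors of the form ∑_{1≤i<j≤d} c_{ij}·(e_i − e_j) with real coefficients satisfying |c_{ij}| ≤ 1/2. Then there exists a dominant integer vector χ ∈ ℤ^d (i.e. with χ_1 ≥ χ_2 ≥ ⋯ ≥ χ_d) such that χ + ρ − (w/d)·(1, 1, …, 1) ∈ W(d) if and only if d divides w. -/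
/-!
Coordinate `t` of `∑_{i<j} c_{ij} (e_i - e_j)` is `∑_{j>t} c_{tj} - ∑_{i<t} c_{it}`, a sum of
`d - 1` terms, so every point of `W(d)` has coordinates in `[-(d-1)/2, (d-1)/2]`. The first and
last coordinates of `ρ` sit at these two extremes, so for `χ + ρ - (w/d)·𝟙 ∈ W(d)` we need
`χ_1 ≤ w/d ≤ χ_d`; with `χ` dominant this forces `χ_1 = w/d ∈ ℤ`. Conversely `ρ` itself is the
point `c_{ij} = 1/2` of `W(d)`, so `χ = (w/d)·𝟙` works when `d ∣ w`.
-/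

open Finset

section

variable {d : ℕ}

def positiveRootCombination (c : Fin d → Fin d → ℝ) : Fin d → ℝ :=
  ∑ i : Fin d, ∑ j : Fin d, if i < j then c i j • (Pi.single i (1 : ℝ) - Pi.single j (1 : ℝ)) else 0

noncomputable def weylVector (d : ℕ) : Fin d → ℝ := fun i => ((d : ℝ) - 1) / 2 - (i : ℕ)

theorem positiveRootCombination_apply (c : Fin d → Fin d → ℝ) (t : Fin d) :
    positiveRootCombination c t = ∑ j ∈ Ioi t, c t j - ∑ i ∈ Iio t, c i t := by
  simp only [positiveRootCombination, Finset.sum_apply, apply_ite (fun f : Fin d → ℝ => f t),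
    Pi.smul_apply, Pi.sub_apply, Pi.single_apply, Pi.zero_apply, smul_eq_mul]
  have hterm (i j : Fin d) :
      (if i < j then c i j * ((if t = i then 1 else 0) - if t = j then 1 else 0) else 0) =
        (if t = i then (if i < j then c i j else 0) else 0) -
          (if t = j then (if i < j then c i j else 0) else 0) := by
    split_ifs <;> simp_all
  simp only [hterm, sum_sub_distrib, sum_ite_irrel, sum_const_zero, sum_ite_eq, mem_univ,
    if_true, ← sum_filter, filter_lt_eq_Ioi, filter_gt_eq_Iio]

theorem Fin.cast_card_Ioi_add_card_Iio (t : Fin d) :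
    ((#(Ioi t) : ℕ) : ℝ) + #(Iio t) = (d : ℝ) - 1 := by
  have := t.isLt
  rw [Fin.card_Ioi, Fin.card_Iio, Nat.cast_sub (by omega), Nat.cast_sub (by omega)]
  ring

theorem abs_positiveRootCombination_apply_le {c : Fin d → Fin d → ℝ} {r : ℝ}
    (hc : ∀ i j, |c i j| ≤ r) (t : Fin d) :
    |positiveRootCombination c t| ≤ ((d : ℝ) - 1) * r := by
  rw [positiveRootCombination_apply, ← Fin.cast_card_Ioi_add_card_Iio t]
  calc |∑ j ∈ Ioi t, c t j - ∑ i ∈ Iio t, c i t|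
      ≤ ∑ j ∈ Ioi t, |c t j| + ∑ i ∈ Iio t, |c i t| :=
        (abs_sub _ _).trans (add_le_add (abs_sum_le_sum_abs _ _) (abs_sum_le_sum_abs _ _))
    _ ≤ ∑ j ∈ Ioi t, r + ∑ i ∈ Iio t, r :=
        add_le_add (sum_le_sum fun j _ => hc t j) (sum_le_sum fun i _ => hc i t)
    _ = _ := by simp only [sum_const, nsmul_eq_mul]; ring

theorem positiveRootCombination_half :
    positiveRootCombination (fun _ _ => 1 / 2) = weylVector d := by
  funext t
  have hcard := Fin.cast_card_Ioi_add_card_Iio t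
  rw [Fin.card_Iio] at hcard
  simp only [positiveRootCombination_apply, weylVector, sum_const, nsmul_eq_mul, Fin.card_Iio]
  linarith

end

/-- Let `ρ = ((d-1)/2, (d-3)/2, …, (1-d)/2) ∈ ℝ^d` and let `W(d)` be the zonotope
of all vectors `∑_{i<j} c_{ij} (e_i - e_j)` with `|c_{ij}| ≤ 1/2`.  Then there is
a dominant integer vector `χ` (i.e. `χ_1 ≥ χ_2 ≥ ⋯ ≥ χ_d`) with
`χ + ρ - (w/d)·(1,…,1) ∈ W(d)` if and only if `d ∣ w`. -/
theorem dominant_weight_in_zonotope_iff_dvd (d : ℕ) (hd : 0 < d) (w : ℤ) :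
    (∃ χ : Fin d → ℤ,
      (∀ i j : Fin d, i ≤ j → χ j ≤ χ i) ∧
      ∃ c : Fin d → Fin d → ℝ, (∀ i j, |c i j| ≤ 1 / 2) ∧
        (fun i : Fin d => (χ i : ℝ) + (((d : ℝ) - 1) / 2 - (i : ℕ)) - (w : ℝ) / (d : ℝ)) =
          ∑ i : Fin d, ∑ j : Fin d,
            if i < j then c i j • (Pi.single i (1 : ℝ) - Pi.single j (1 : ℝ)) else 0) ↔
    (d : ℤ) ∣ w := by
  constructor
  · rintro ⟨χ, hdom, c, hc, hχ⟩
    have hcoord (t : Fin d) : (χ t : ℝ) + weylVector d t - w / d = positiveRootCombination c t :=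
      congrFun hχ t
    let first : Fin d := ⟨0, hd⟩
    let last : Fin d := ⟨d - 1, Nat.sub_lt hd one_pos⟩
    have h_first := (abs_le.mp (abs_positiveRootCombination_apply_le hc first)).2
    have h_last := (abs_le.mp (abs_positiveRootCombination_apply_le hc last)).1
    have h_dom : (χ last : ℝ) ≤ χ first := by exact_mod_cast hdom first last (Nat.zero_le _)
    have h_eq : (χ first : ℝ) = w / d := by
      rw [← hcoord] at h_first h_last
      simp only [weylVector, first, last, Nat.cast_zero, Nat.cast_pred hd] at h_first h_last h_dom ⊢
      linarith
    rw [eq_div_iff (by positivity)] at h_eq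
    exact ⟨χ first, by rw [mul_comm]; exact_mod_cast h_eq.symm⟩
  · rintro ⟨k, rfl⟩
    refine ⟨fun _ => k, fun _ _ _ => le_rfl, fun _ _ => 1 / 2, fun _ _ => by norm_num, ?_⟩
    change _ = positiveRootCombination _
    rw [positiveRootCombination_half]
    funext t
    simp only [weylVector, Int.cast_mul, Int.cast_natCast]
    field_simp
    ring
end
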